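/- arXiv:math/0407095 — 8 statements merged into one kernel-verified Lean document; each statement's English description precedes it below -/
import Mathlib

section
/- (Rafael's theorem, left adjoint case) Let T ⊣ H be an adjunction with unit η : Id → H∘T. Then T is separable if and only if there exists a natural transformation μ : H∘T → Id with μ ∘ η = id. -/
open CategoryTheory

/-- A functor `U` is separable if the natural transformation
`Hom(X, Y) → Hom(U X, U Y)`, `f ↦ U.map f`, admits a natural retraction. -/
def SeparableFunctor {𝔹 : Type*} {𝔸 : Type*} [Category 𝔹] [Category 𝔸]
    (U : 𝔹 ⥤ 𝔸) : Prop :=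
  ∃ P : ∀ (X Y : 𝔹), (U.obj X ⟶ U.obj Y) → (X ⟶ Y),
    (∀ (X Y : 𝔹) (f : X ⟶ Y), P X Y (U.map f) = f) ∧
    (∀ (X' X Y Y' : 𝔹) (a : X' ⟶ X) (b : Y ⟶ Y') (g : U.obj X ⟶ U.obj Y),
      P X' Y' (U.map a ≫ g ≫ U.map b) = a ≫ P X Y g ≫ b)

/-- Rafael's theorem, left adjoint case. -/
theorem rafael_left_adjoint
    {𝔸 : Type*} {𝔹 : Type*} [Category 𝔸] [Category 𝔹]
    (T : 𝔸 ⥤ 𝔹) (H : 𝔹 ⥤ 𝔸) (adj : T ⊣ H) :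
    SeparableFunctor T ↔ ∃ μ : T ⋙ H ⟶ 𝟭 𝔸, adj.unit ≫ μ = 𝟙 (𝟭 𝔸) := by
  constructor
  · rintro ⟨P, hret, hnat⟩
    refine ⟨⟨fun X => P _ _ (adj.counit.app (T.obj X)), ?_⟩, ?_⟩
    · intro X Y f
      have h1 : H.map (T.map f) ≫ P _ _ (adj.counit.app (T.obj Y)) =
          P _ _ (T.map (H.map (T.map f)) ≫ adj.counit.app (T.obj Y) ≫ T.map (𝟙 Y)) := by
        rw [hnat]; simp
      have h2 : P _ _ (adj.counit.app (T.obj X)) ≫ f =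
          P _ _ (T.map (𝟙 (H.obj (T.obj X))) ≫ adj.counit.app (T.obj X) ≫ T.map f) := by
        rw [hnat]; simp
      simp only [Functor.comp_obj, Functor.comp_map, Functor.id_obj, Functor.id_map]
      rw [h1, h2]
      congr 1
      simp [adj.counit.naturality]
    · ext X
      simp only [NatTrans.comp_app, Functor.id_obj, NatTrans.id_app]
      have := hnat X (H.obj (T.obj X)) X X (adj.unit.app X)
        (𝟙 X) (adj.counit.app (T.obj X))
      simp only [Category.comp_id] at this
      dsimp only [Functor.comp_obj]
      rw [← this]
      have : T.map (adj.unit.app X) ≫ adj.counit.app (T.obj X) ≫ T.map (𝟙 _) =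
          T.map (𝟙 X) := by simp
      rw [this, hret]
  · rintro ⟨μ, hμ⟩
    have hμ' : ∀ X : 𝔸, adj.unit.app X ≫ μ.app X = 𝟙 X := fun X =>
      congrArg (fun t => t.app X) hμ
    refine ⟨fun X Y g => adj.unit.app X ≫ H.map g ≫ μ.app Y, ?_, ?_⟩
    · intro X Y f
      dsimp only
      have := μ.naturality f
      simp only [Functor.comp_map, Functor.id_map] at this
      rw [this, ← Category.assoc, hμ' X, Category.id_comp]
    · intro X' X Y Y' a b g
      have hb := μ.naturality b
      simp only [Functor.comp_map, Functor.id_map] at hb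
      have ha := adj.unit.naturality a
      simp only [Functor.comp_map, Functor.id_map] at ha
      simp only [Functor.map_comp, Category.assoc, hb]
      rw [← Category.assoc, ← Category.assoc, ← ha]
      simp
end

section
/- (Rafael's theorem, right adjoint case) Let T ⊣ H be an adjunction with counit ε : T∘H → Id. Then H is separable if and only if there exists a natural transformation σ : Id → T∘H with ε ∘ σ = id. -/
open CategoryTheory

/-- Rafael's theorem, right adjoint case. -/
theorem rafael_right_adjoint
    {𝔸 : Type*} {𝔹 : Type*} [Category 𝔸] [Category 𝔹]
    (T : 𝔸 ⥤ 𝔹) (H : 𝔹 ⥤ 𝔸) (adj : T ⊣ H) :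
    SeparableFunctor H ↔ ∃ σ : 𝟭 𝔹 ⟶ H ⋙ T, σ ≫ adj.counit = 𝟙 (𝟭 𝔹) := by
  constructor
  · rintro ⟨P, h1, h2⟩
    refine ⟨⟨fun X => P X (T.obj (H.obj X)) (adj.unit.app (H.obj X)), ?_⟩, ?_⟩
    · intro X Y f
      dsimp only [Functor.id_map, Functor.comp_map]
      have hL := h2 X Y (T.obj (H.obj Y)) (T.obj (H.obj Y)) f (𝟙 _)
        (adj.unit.app (H.obj Y))
      have hR := h2 X X (T.obj (H.obj X)) (T.obj (H.obj Y)) (𝟙 X)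
        (T.map (H.map f)) (adj.unit.app (H.obj X))
      simp only [H.map_id, Category.comp_id, Category.id_comp] at hL hR
      rw [← hL, ← hR]
      congr 1
      exact adj.unit.naturality (H.map f)
    · ext X
      have := h2 X X (T.obj (H.obj X)) X (𝟙 X) (adj.counit.app X)
        (adj.unit.app (H.obj X))
      simp only [H.map_id, Category.id_comp] at this
      simp only [NatTrans.comp_app, NatTrans.id_app, Functor.id_obj]
      rw [← this, adj.right_triangle_components, ← H.map_id, h1]
  · rintro ⟨σ, hσ⟩
    have hσ' : ∀ X, σ.app X ≫ adj.counit.app X = 𝟙 X := fun X =>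
      congrArg (fun t => NatTrans.app t X) hσ
    refine ⟨fun X Y g => σ.app X ≫ T.map g ≫ adj.counit.app Y, ?_, ?_⟩
    · intro X Y f
      have := σ.naturality f
      simp only [Functor.id_map, Functor.comp_map] at this
      dsimp only
      rw [← Category.assoc, ← this]
      simp [hσ']
    · intro X' X Y Y' a b g
      have hX := σ.naturality a
      simp only [Functor.id_map, Functor.comp_map] at hX
      have hY := adj.counit.naturality b
      simp only [Functor.id_map, Functor.comp_map] at hY
      simp only [T.map_comp, Category.assoc]
      rw [← Category.assoc (σ.app X'), ← hX]
      simp [hY]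
end

section
/- If H is a separable right adjoint in an adjunction T ⊣ H, then every object B of 𝔹 is relatively projective with respect to the class of morphisms f such that H(f) splits. -/
open CategoryTheory

theorem separable_right_adjoint_all_rel_projective
    {𝔸 : Type*} {𝔹 : Type*} [Category 𝔸] [Category 𝔹]
    (T : 𝔸 ⥤ 𝔹) (H : 𝔹 ⥤ 𝔸) (adj : T ⊣ H) (hH : SeparableFunctor H) :
    ∀ (B : 𝔹) ⦃B₁ B₂ : 𝔹⦄ (f : B₁ ⟶ B₂),
      (∃ s : H.obj B₂ ⟶ H.obj B₁, s ≫ H.map f = 𝟙 (H.obj B₂)) →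
      ∀ γ : B ⟶ B₂, ∃ β : B ⟶ B₁, β ≫ f = γ := by
  obtain ⟨P, hret, hnat⟩ := hH
  intro B B₁ B₂ f ⟨s, hs⟩ γ
  refine ⟨P B B₁ (H.map γ ≫ s), ?_⟩
  have h := hnat B B B₁ B₂ (𝟙 B) f (H.map γ ≫ s)
  simp only [H.map_id, Category.id_comp, Category.assoc, hs, Category.comp_id] at h
  rw [hret] at h
  exact h.symm
end

section
/- Let K be a field and A a K-algebra. For a ring homomorphism i : S → R of unital rings, the following are equivalent: (1) R is separable as an S-algebra, i.e. the multiplication map R ⊗_S R → R has an R-bimodule section; (2) the restriction of scalars functor from left R-modules to left S-modules is separable. -/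
open CategoryTheory TensorProduct

/-!
A separability idempotent `e = ∑ aᵢ ⊗ bᵢ ∈ R ⊗[S] R` (with `∑ aᵢ bᵢ = 1` and `r e = e r`)
corresponds to a bimodule section `x ↦ (x ⊗ 1) e` of the multiplication. Given `e`, an `S`-linear
map `g` between `R`-modules is averaged to the `R`-linear map `x ↦ ∑ aᵢ g (bᵢ x)`; this is a
natural retraction of restriction of scalars on Hom-sets. Conversely, a natural retraction `P`
applied to the `S`-linear map `x ↦ 1 ⊗ x` from `R` to `R ⊗[S] R` gives an `R`-linear section of
the multiplication (naturality in `R ⊗[S] R → R`) which commutes with right multiplications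
(naturality in `· * r`), so its value at `1` is a separability idempotent.
-/

namespace SeparableAlgebra

universe u v

variable {S : Type*} [CommRing S] {R : Type u} [Ring R] [Algebra S R]

def IsSeparabilityIdempotent (e : R ⊗[S] R) : Prop :=
  LinearMap.mul' S R e = 1 ∧ ∀ r : R, (r ⊗ₜ[S] (1 : R)) * e = e * ((1 : R) ⊗ₜ[S] r)

theorem smul_eq_tmul_one_mul (r : R) (t : R ⊗[S] R) : r • t = (r ⊗ₜ[S] (1 : R)) * t := by
  induction t with
  | zero => simp
  | tmul a b => rw [Algebra.TensorProduct.tmul_mul_tmul, one_mul, smul_tmul', smul_eq_mul]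
  | add t₁ t₂ h₁ h₂ => rw [smul_add, mul_add, h₁, h₂]

theorem mul'_tmul_one_mul (r : R) (t : R ⊗[S] R) :
    LinearMap.mul' S R ((r ⊗ₜ[S] (1 : R)) * t) = r * LinearMap.mul' S R t := by
  induction t with
  | zero => simp
  | tmul a b => simp only [Algebra.TensorProduct.tmul_mul_tmul, one_mul, LinearMap.mul'_apply,
      mul_assoc]
  | add t₁ t₂ h₁ h₂ => rw [mul_add, map_add, map_add, h₁, h₂, mul_add]

theorem mul'_smul (r : R) (t : R ⊗[S] R) :
    LinearMap.mul' S R (r • t) = r * LinearMap.mul' S R t := by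
  rw [smul_eq_tmul_one_mul, mul'_tmul_one_mul]

variable (S R) in
theorem exists_bimodule_section_iff :
    (∃ σ : R →ₗ[S] R ⊗[S] R,
        (∀ x : R, LinearMap.mul' S R (σ x) = x) ∧
        (∀ (r x : R), σ (r * x) = (r ⊗ₜ[S] (1 : R)) * σ x) ∧
        (∀ (r x : R), σ (x * r) = σ x * ((1 : R) ⊗ₜ[S] r))) ↔
      ∃ e : R ⊗[S] R, IsSeparabilityIdempotent e := by
  constructor
  · rintro ⟨σ, hmul, hleft, hright⟩
    refine ⟨σ 1, hmul 1, fun r => ?_⟩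
    have h₁ := hleft r 1
    have h₂ := hright r 1
    rw [mul_one] at h₁
    rw [one_mul] at h₂
    rw [← h₁, h₂]
  · rintro ⟨e, hmul, hcomm⟩
    refine ⟨LinearMap.mulRight S e ∘ₗ Algebra.TensorProduct.includeLeft.toLinearMap,
      fun x => ?_, fun r x => ?_, fun r x => ?_⟩ <;>
      simp only [LinearMap.comp_apply, AlgHom.toLinearMap_apply,
        Algebra.TensorProduct.includeLeft_apply, LinearMap.mulRight_apply]
    · rw [mul'_tmul_one_mul, hmul, mul_one]
    · rw [← one_mul (1 : R), ← Algebra.TensorProduct.tmul_mul_tmul, one_mul, mul_assoc]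
    · rw [← one_mul (1 : R), ← Algebra.TensorProduct.tmul_mul_tmul, one_mul, mul_assoc, hcomm,
        mul_assoc]

section Sandwich

variable {X Y X' Y' : Type*} [AddCommGroup X] [Module R X] [AddCommGroup Y] [Module R Y]
  [AddCommGroup X'] [Module R X'] [AddCommGroup Y'] [Module R Y']

/-- `t = ∑ aᵢ ⊗ bᵢ ↦ ∑ aᵢ • g (bᵢ • x)`. -/
def sandwich (g : X →+ Y)
    (hg : ∀ (s : S) (z : X), g (algebraMap S R s • z) = algebraMap S R s • g z) (x : X) :
    R ⊗[S] R →+ Y :=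
  liftAddHom ((smulAddHom R Y).compl₂ (g.comp ((smulAddHom R X).flip x))) fun s a b => by
    simp only [AddMonoidHom.compl₂_apply, AddMonoidHom.comp_apply, AddMonoidHom.flip_apply,
      smulAddHom_apply, Algebra.smul_def, Algebra.commutes s a, mul_smul, hg]

variable {g : X →+ Y}
  {hg : ∀ (s : S) (z : X), g (algebraMap S R s • z) = algebraMap S R s • g z}

@[simp]
theorem sandwich_tmul (x : X) (a b : R) : sandwich g hg x (a ⊗ₜ[S] b) = a • g (b • x) := rfl

theorem sandwich_add (x x' : X) (t : R ⊗[S] R) :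
    sandwich g hg (x + x') t = sandwich g hg x t + sandwich g hg x' t := by
  induction t with
  | zero => simp
  | tmul a b => simp [smul_add]
  | add t₁ t₂ h₁ h₂ => rw [map_add, map_add, map_add, h₁, h₂, add_add_add_comm]

theorem sandwich_tmul_one_mul (x : X) (r : R) (t : R ⊗[S] R) :
    sandwich g hg x ((r ⊗ₜ[S] (1 : R)) * t) = r • sandwich g hg x t := by
  induction t with
  | zero => simp
  | tmul a b => simp [Algebra.TensorProduct.tmul_mul_tmul, mul_smul]
  | add t₁ t₂ h₁ h₂ => rw [mul_add, map_add, map_add, h₁, h₂, smul_add]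

theorem sandwich_mul_one_tmul (x : X) (r : R) (t : R ⊗[S] R) :
    sandwich g hg x (t * ((1 : R) ⊗ₜ[S] r)) = sandwich g hg (r • x) t := by
  induction t with
  | zero => simp
  | tmul a b => simp [Algebra.TensorProduct.tmul_mul_tmul, mul_smul]
  | add t₁ t₂ h₁ h₂ => rw [add_mul, map_add, map_add, h₁, h₂]

theorem sandwich_eq_mul'_smul (f : X →ₗ[R] Y) (hgf : ∀ z, g z = f z) (x : X) (t : R ⊗[S] R) :
    sandwich g hg x t = LinearMap.mul' S R t • f x := by
  induction t with
  | zero => simp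
  | tmul a b => simp [hgf, mul_smul]
  | add t₁ t₂ h₁ h₂ => rw [map_add, map_add, h₁, h₂, add_smul]

theorem sandwich_comp {g' : X' →+ Y'}
    {hg' : ∀ (s : S) (z : X'), g' (algebraMap S R s • z) = algebraMap S R s • g' z}
    (a : X' →ₗ[R] X) (b : Y →ₗ[R] Y') (hcomp : ∀ z, g' z = b (g (a z))) (x : X')
    (t : R ⊗[S] R) : sandwich g' hg' x t = b (sandwich g hg (a x) t) := by
  induction t with
  | zero => simp
  | tmul p q => simp [hcomp]
  | add t₁ t₂ h₁ h₂ => rw [map_add, map_add, h₁, h₂, map_add]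

end Sandwich

noncomputable def restrictScalarsAddHom {X Y : ModuleCat R}
    (g : (ModuleCat.restrictScalars (algebraMap S R)).obj X ⟶
      (ModuleCat.restrictScalars (algebraMap S R)).obj Y) : X →+ Y :=
  AddMonoidHom.mk' (fun z : X => (g z : Y)) g.hom.map_add

theorem restrictScalarsAddHom_algebraMap_smul {X Y : ModuleCat R}
    (g : (ModuleCat.restrictScalars (algebraMap S R)).obj X ⟶
      (ModuleCat.restrictScalars (algebraMap S R)).obj Y) (s : S) (z : X) :
    restrictScalarsAddHom g (algebraMap S R s • z) = algebraMap S R s • restrictScalarsAddHom g z :=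
  g.hom.map_smul s z

noncomputable def separabilityRetraction {e : R ⊗[S] R} (he : IsSeparabilityIdempotent e)
    {X Y : ModuleCat R} (g : (ModuleCat.restrictScalars (algebraMap S R)).obj X ⟶
      (ModuleCat.restrictScalars (algebraMap S R)).obj Y) : X ⟶ Y :=
  ModuleCat.ofHom
    { toFun := fun x => sandwich _ (restrictScalarsAddHom_algebraMap_smul g) x e
      map_add' := fun x x' => sandwich_add x x' e
      map_smul' := fun r x => by
        rw [RingHom.id_apply, ← sandwich_mul_one_tmul, ← he.2, sandwich_tmul_one_mul] }

theorem separableFunctor_restrictScalars {e : R ⊗[S] R} (he : IsSeparabilityIdempotent e) :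
    SeparableFunctor (ModuleCat.restrictScalars (algebraMap S R)) := by
  refine ⟨fun X Y g => separabilityRetraction he g, fun X Y f => ?_, fun X' X Y Y' a b g => ?_⟩ <;>
    ext x
  · refine (sandwich_eq_mul'_smul (hg := restrictScalarsAddHom_algebraMap_smul _) f.hom
      (fun _ => rfl) x e).trans ?_
    rw [he.1, one_smul]
  · exact sandwich_comp (hg := restrictScalarsAddHom_algebraMap_smul g)
      (hg' := restrictScalarsAddHom_algebraMap_smul _) a.hom b.hom (fun _ => rfl) x e

variable (R) in
abbrev regularModule : ModuleCat.{max u v} R := ModuleCat.of R (ULift.{v} R)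

variable (S R) in
abbrev tensorModule : ModuleCat.{max u v} R := ModuleCat.of R (ULift.{v} (R ⊗[S] R))

noncomputable def mulHom : tensorModule.{u, v} S R ⟶ regularModule.{u, v} R :=
  ModuleCat.ofHom
    { toFun := fun t => ⟨LinearMap.mul' S R t.down⟩
      map_add' := fun t t' => congrArg ULift.up (map_add _ t.down t'.down)
      map_smul' := fun r t => congrArg ULift.up (mul'_smul r t.down) }

noncomputable def mulRightHom (r : R) : regularModule.{u, v} R ⟶ regularModule.{u, v} R :=
  ModuleCat.ofHom
    { toFun := fun x => ⟨x.down * r⟩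
      map_add' := fun x x' => congrArg ULift.up (add_mul x.down x'.down r)
      map_smul' := fun r' x => congrArg ULift.up (mul_assoc r' x.down r) }

noncomputable def mulRightOneTmulHom (r : R) : tensorModule.{u, v} S R ⟶ tensorModule.{u, v} S R :=
  ModuleCat.ofHom
    { toFun := fun t => ⟨t.down * ((1 : R) ⊗ₜ[S] r)⟩
      map_add' := fun t t' => congrArg ULift.up (add_mul t.down t'.down _)
      map_smul' := fun r' t => congrArg ULift.up (by
        simp only [ULift.smul_down, smul_eq_tmul_one_mul, mul_assoc, RingHom.id_apply]) }

noncomputable def oneTmulHom :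
    (ModuleCat.restrictScalars (algebraMap S R)).obj (regularModule.{u, v} R) ⟶
      (ModuleCat.restrictScalars (algebraMap S R)).obj (tensorModule.{u, v} S R) :=
  ModuleCat.ofHom (X := (ModuleCat.restrictScalars (algebraMap S R)).obj (regularModule.{u, v} R))
    (Y := (ModuleCat.restrictScalars (algebraMap S R)).obj (tensorModule.{u, v} S R))
    { toFun := fun x => ⟨(1 : R) ⊗ₜ[S] x.down⟩
      map_add' := fun x x' => congrArg ULift.up (tmul_add _ _ _)
      map_smul' := fun s x => congrArg ULift.up (by
        change (1 : R) ⊗ₜ[S] (algebraMap S R s • x.down) = algebraMap S R s • ((1 : R) ⊗ₜ[S] x.down)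
        rw [algebraMap_smul, smul_tmul', ← smul_tmul, algebraMap_smul]) }

theorem oneTmulHom_comp_map_mulHom :
    oneTmulHom.{u, v} (S := S) (R := R) ≫ (ModuleCat.restrictScalars (algebraMap S R)).map mulHom =
      𝟙 _ := by
  ext x
  change (⟨LinearMap.mul' S R ((1 : R) ⊗ₜ[S] x.down)⟩ : ULift R) = x
  rw [LinearMap.mul'_apply, one_mul]
  rfl

theorem map_mulRightHom_comp_oneTmulHom (r : R) :
    (ModuleCat.restrictScalars (algebraMap S R)).map (mulRightHom r) ≫ oneTmulHom.{u, v} =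
      oneTmulHom ≫ (ModuleCat.restrictScalars (algebraMap S R)).map (mulRightOneTmulHom r) := by
  ext x
  change (⟨(1 : R) ⊗ₜ[S] (x.down * r)⟩ : ULift (R ⊗[S] R)) =
    ⟨((1 : R) ⊗ₜ[S] x.down) * ((1 : R) ⊗ₜ[S] r)⟩
  rw [Algebra.TensorProduct.tmul_mul_tmul, one_mul]

theorem isSeparabilityIdempotent_of_section (p : regularModule.{u, v} R ⟶ tensorModule.{u, v} S R)
    (hp : p ≫ mulHom = 𝟙 _) (hcomm : ∀ r : R, mulRightHom r ≫ p = p ≫ mulRightOneTmulHom r) :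
    IsSeparabilityIdempotent (p ⟨1⟩).down := by
  refine ⟨congrArg (fun f => (f.hom ⟨1⟩).down) hp, fun r => ?_⟩
  have hr : r • (⟨1⟩ : ULift R) = (mulRightHom r).hom ⟨1⟩ :=
    congrArg ULift.up ((mul_one r).trans (one_mul r).symm)
  calc (r ⊗ₜ[S] (1 : R)) * (p ⟨1⟩).down = (p (r • ⟨1⟩)).down := by
        rw [map_smul, ULift.smul_down, smul_eq_tmul_one_mul]
    _ = (p ((mulRightHom r).hom ⟨1⟩)).down := by rw [hr]
    _ = (p ⟨1⟩).down * ((1 : R) ⊗ₜ[S] r) := congrArg (fun f => (f.hom ⟨1⟩).down) (hcomm r)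

theorem exists_isSeparabilityIdempotent_of_separableFunctor
    (h : SeparableFunctor (ModuleCat.restrictScalars.{max u v} (algebraMap S R))) :
    ∃ e : R ⊗[S] R, IsSeparabilityIdempotent e := by
  obtain ⟨P, hP, hPnat⟩ := h
  have hpre : ∀ {X X' Y : ModuleCat.{max u v} R} (a : X' ⟶ X) g,
      P X' Y ((ModuleCat.restrictScalars (algebraMap S R)).map a ≫ g) = a ≫ P X Y g := by
    intro X X' Y a g
    simpa using hPnat X' X Y Y a (𝟙 Y) g
  have hpost : ∀ {X Y Y' : ModuleCat.{max u v} R} (b : Y ⟶ Y') g,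
      P X Y' (g ≫ (ModuleCat.restrictScalars (algebraMap S R)).map b) = P X Y g ≫ b := by
    intro X Y Y' b g
    simpa using hPnat X X Y Y' (𝟙 X) b g
  refine ⟨_, isSeparabilityIdempotent_of_section (P _ _ oneTmulHom) ?_ fun r => ?_⟩
  · rw [← hpost, oneTmulHom_comp_map_mulHom, ← (ModuleCat.restrictScalars _).map_id, hP]
  · rw [← hpre, ← hpost, map_mulRightHom_comp_oneTmulHom]

end SeparableAlgebra

/-- `R/S` is separable (the multiplication `R ⊗[S] R → R` has an `R`-bimodule
section) if and only if the restriction of scalars functor from `R`-modules to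
`S`-modules is separable. -/
theorem separable_extension_iff_restriction_separable
    (S : Type) [CommRing S] (R : Type) [Ring R] [Algebra S R] :
    (∃ σ : R →ₗ[S] R ⊗[S] R,
        (∀ x : R, LinearMap.mul' S R (σ x) = x) ∧
        (∀ (r x : R), σ (r * x) = (r ⊗ₜ[S] (1 : R)) * σ x) ∧
        (∀ (r x : R), σ (x * r) = σ x * ((1 : R) ⊗ₜ[S] r))) ↔
      SeparableFunctor (ModuleCat.restrictScalars (algebraMap S R)) := by
  rw [SeparableAlgebra.exists_bimodule_section_iff]
  exact ⟨fun ⟨_, he⟩ => SeparableAlgebra.separableFunctor_restrictScalars he,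
    SeparableAlgebra.exists_isSeparabilityIdempotent_of_separableFunctor⟩
end

section
/- Let H be a Hopf algebra over a field K and λ ∈ H* a left integral on H (i.e. h₁ λ(h₂) = λ(h) 1_H for all h ∈ H) with λ(1) = 1. Then the map θ_λ : H ⊗ H → H, x ⊗ y ↦ x₁ λ(x₂ S(y)), is an H-bicolinear retraction of the comultiplication Δ : H → H ⊗ H; in particular H is a coseparable coalgebra. -/
/-!
Write `θ(x ⊗ y) = x₁ λ(x₂ S y)`. In this form `θ ∘ Δ = id` follows from
`x₁ ⊗ x₂ S(x₃) = x ⊗ 1`, and left colinearity from coassociativity. Right colinearity needs the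
mirror formula `θ(x ⊗ y) = λ(x S y₁) y₂`, which is where the integral enters: it gives
`θ(b z₁ ⊗ z₂) = λ(b) z`, and `x ⊗ y = x S(y₁) y₂ ⊗ y₃` writes every tensor in that shape.
-/

open TensorProduct

variable {K : Type*} {H : Type*} [Field K] [Ring H] [HopfAlgebra K H]

/-- The map `θ_λ : H ⊗ H → H`, `x ⊗ y ↦ x₁ λ(x₂ S(y))`. -/
noncomputable def thetaMap (lam : H →ₗ[K] K) : H ⊗[K] H →ₗ[K] H :=
  (TensorProduct.rid K H).toLinearMap
    ∘ₗ LinearMap.lTensor H lam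
    ∘ₗ LinearMap.lTensor H (LinearMap.mul' K H)
    ∘ₗ (TensorProduct.assoc K H H H).toLinearMap
    ∘ₗ LinearMap.rTensor H (Coalgebra.comul (R := K))
    ∘ₗ LinearMap.lTensor H (HopfAlgebra.antipode (R := K))

open Coalgebra HopfAlgebra

section Coalgebra

variable {R A : Type*} [CommSemiring R] [AddCommMonoid A] [Module R A] [Coalgebra R A]

noncomputable def leftHit (φ : A →ₗ[R] R) : A →ₗ[R] A :=
  (TensorProduct.rid R A).toLinearMap ∘ₗ φ.lTensor A ∘ₗ comul

noncomputable def rightHit (φ : A →ₗ[R] R) : A →ₗ[R] A :=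
  (TensorProduct.lid R A).toLinearMap ∘ₗ φ.rTensor A ∘ₗ comul

lemma leftHit_apply (φ : A →ₗ[R] R) {a : A} {ι : Type*} (𝓡 : Repr R a ι) :
    leftHit φ a = ∑ i ∈ 𝓡.index, φ (𝓡.right i) • 𝓡.left i := by
  simp [leftHit, ← 𝓡.eq]

lemma rightHit_apply (φ : A →ₗ[R] R) {a : A} {ι : Type*} (𝓡 : Repr R a ι) :
    rightHit φ a = ∑ i ∈ 𝓡.index, φ (𝓡.left i) • 𝓡.right i := by
  simp [rightHit, ← 𝓡.eq]

lemma sum_smul_counit {a : A} {ι : Type*} (𝓡 : Repr R a ι) :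
    ∑ i ∈ 𝓡.index, counit (R := R) (𝓡.right i) • 𝓡.left i = a := by
  simpa only [map_sum, rid_tmul, one_smul] using
    congr(TensorProduct.rid R A $(sum_tmul_counit_eq 𝓡))

lemma comul_leftHit (φ : A →ₗ[R] R) (a : A) :
    comul (leftHit φ a) = (leftHit φ).lTensor A (comul (R := R) a) := by
  let 𝓡 := ℛ R a
  have h := sum_tmul_tmul_eq 𝓡 (fun i ↦ ℛ R (𝓡.left i)) (fun i ↦ ℛ R (𝓡.right i))
  apply_fun ((TensorProduct.rid R A).toLinearMap ∘ₗ φ.lTensor A).lTensor A at h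
  simp only [map_sum, LinearMap.lTensor_tmul, LinearMap.comp_apply, LinearEquiv.coe_coe,
    rid_tmul] at h
  simp only [leftHit_apply φ 𝓡, map_sum, map_smul, ← (ℛ R (𝓡.left _)).eq, Finset.smul_sum,
    smul_tmul', smul_tmul, h]
  conv_rhs => rw [← 𝓡.eq]
  simp only [map_sum, LinearMap.lTensor_tmul, leftHit_apply φ (ℛ R (𝓡.right _)), tmul_sum]

lemma comul_rightHit (φ : A →ₗ[R] R) (a : A) :
    comul (rightHit φ a) = (rightHit φ).rTensor A (comul (R := R) a) := by
  let 𝓡 := ℛ R a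
  have h := sum_tmul_tmul_eq 𝓡 (fun i ↦ ℛ R (𝓡.left i)) (fun i ↦ ℛ R (𝓡.right i))
  apply_fun (TensorProduct.lid R (A ⊗[R] A)).toLinearMap ∘ₗ φ.rTensor (A ⊗[R] A) at h
  simp only [map_sum, LinearMap.rTensor_tmul, LinearMap.comp_apply, LinearEquiv.coe_coe,
    lid_tmul, smul_tmul'] at h
  simp only [rightHit_apply φ 𝓡, map_sum, map_smul, ← (ℛ R (𝓡.right _)).eq, Finset.smul_sum,
    smul_tmul', ← h]
  conv_rhs => rw [← 𝓡.eq]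
  simp only [map_sum, LinearMap.rTensor_tmul, rightHit_apply φ (ℛ R (𝓡.left _)), sum_tmul]

end Coalgebra

lemma rid_lTensor_mul_tmul_one {R A : Type*} [CommSemiring R] [Semiring A] [Algebra R A]
    (φ : A →ₗ[R] R) (w : A ⊗[R] A) (z : A) :
    TensorProduct.rid R A (φ.lTensor A (w * (z ⊗ₜ 1))) =
      TensorProduct.rid R A (φ.lTensor A w) * z := by
  induction w using TensorProduct.induction_on with
  | zero => simp
  | tmul u v => simp [Algebra.TensorProduct.tmul_mul_tmul]
  | add u v hu hv => simp [add_mul, hu, hv]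

section HopfAlgebra

variable {R A : Type*} [CommSemiring R] [Semiring A] [HopfAlgebra R A]

lemma sum_comul_mul_tmul_antipode {a : A} {ι : Type*} (𝓡 : Repr R a ι) :
    ∑ i ∈ 𝓡.index, comul (𝓡.left i) * (1 ⊗ₜ antipode R (𝓡.right i)) = a ⊗ₜ[R] 1 := by
  have h := sum_tmul_tmul_eq 𝓡 (fun i ↦ ℛ R (𝓡.left i)) (fun i ↦ ℛ R (𝓡.right i))
  apply_fun (LinearMap.mul' R A ∘ₗ (antipode R).lTensor A).lTensor A at h
  simp only [map_sum, LinearMap.lTensor_tmul, LinearMap.comp_apply, LinearMap.mul'_apply,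
    ← tmul_sum, sum_mul_antipode_eq_smul] at h
  simp only [← (ℛ R (𝓡.left _)).eq, Finset.sum_mul, Algebra.TensorProduct.tmul_mul_tmul,
    mul_one, h]
  simp only [← smul_tmul, ← sum_tmul, sum_smul_counit]

lemma sum_antipode_tmul_mul_comul {a : A} {ι : Type*} (𝓡 : Repr R a ι) :
    ∑ i ∈ 𝓡.index, (antipode R (𝓡.left i) ⊗ₜ 1) * comul (𝓡.right i) = (1 : A) ⊗ₜ[R] a := by
  have h := sum_tmul_tmul_eq 𝓡 (fun i ↦ ℛ R (𝓡.left i)) (fun i ↦ ℛ R (𝓡.right i))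
  apply_fun (LinearMap.mul' R A ∘ₗ (antipode R).rTensor A).rTensor A ∘ₗ
    (TensorProduct.assoc R A A A).symm.toLinearMap at h
  simp only [map_sum, LinearMap.rTensor_tmul, LinearMap.comp_apply, LinearMap.mul'_apply,
    LinearEquiv.coe_coe, assoc_symm_tmul, ← sum_tmul, sum_antipode_mul_eq_smul] at h
  simp only [← (ℛ R (𝓡.right _)).eq, Finset.mul_sum, Algebra.TensorProduct.tmul_mul_tmul,
    one_mul, ← h]
  simp only [smul_tmul, ← tmul_sum, sum_counit_smul]

end HopfAlgebra

section ThetaMap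

variable (lam : H →ₗ[K] K)

lemma thetaMap_tmul (x y : H) :
    thetaMap lam (x ⊗ₜ y) =
      TensorProduct.rid K H (lam.lTensor H (comul x * (1 ⊗ₜ antipode K y))) := by
  simp only [thetaMap, LinearMap.comp_apply, LinearEquiv.coe_coe, LinearMap.lTensor_tmul,
    LinearMap.rTensor_tmul]
  rw [← (ℛ K x).eq]
  simp [sum_tmul, Finset.sum_mul, Algebra.TensorProduct.tmul_mul_tmul]

lemma thetaMap_tmul_eq_leftHit (x y : H) :
    thetaMap lam (x ⊗ₜ y) = leftHit (lam ∘ₗ LinearMap.mulRight K (antipode K y)) x := by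
  rw [thetaMap_tmul, leftHit_apply _ (ℛ K x), ← (ℛ K x).eq]
  simp [Finset.sum_mul, Algebra.TensorProduct.tmul_mul_tmul]

lemma thetaMap_comp_comul (hlam1 : lam 1 = 1) : thetaMap lam ∘ₗ comul = LinearMap.id := by
  ext x
  rw [LinearMap.comp_apply, ← (ℛ K x).eq]
  simp only [map_sum, thetaMap_tmul]
  rw [← map_sum, ← map_sum, sum_comul_mul_tmul_antipode]
  simp [hlam1]

lemma thetaMap_tmul_one_mul_comul (hlam : ∀ h, leftHit lam h = lam h • 1) (b z : H) :
    thetaMap lam ((b ⊗ₜ 1) * comul z) = lam b • z := by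
  rw [← (ℛ K z).eq, Finset.mul_sum]
  simp only [Algebra.TensorProduct.tmul_mul_tmul, one_mul, map_sum, thetaMap_tmul,
    Bialgebra.comul_mul, mul_assoc]
  rw [← map_sum, ← map_sum, ← Finset.mul_sum, sum_comul_mul_tmul_antipode,
    rid_lTensor_mul_tmul_one]
  exact (congrArg (· * z) (hlam b)).trans (smul_one_mul _ _)

lemma thetaMap_tmul_eq_rightHit (hlam : ∀ h, leftHit lam h = lam h • 1) (x y : H) :
    thetaMap lam (x ⊗ₜ y) = rightHit (lam ∘ₗ LinearMap.mulLeft K x ∘ₗ antipode K (A := H)) y := by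
  have hxy : x ⊗ₜ[K] y = ∑ i ∈ (ℛ K y).index,
      ((x * antipode K ((ℛ K y).left i)) ⊗ₜ 1) * comul ((ℛ K y).right i) := by
    calc x ⊗ₜ[K] y = (x ⊗ₜ 1) * (1 ⊗ₜ y) := by simp [Algebra.TensorProduct.tmul_mul_tmul]
      _ = _ := by
        simp [← sum_antipode_tmul_mul_comul (ℛ K y), Finset.mul_sum, ← mul_assoc,
          Algebra.TensorProduct.tmul_mul_tmul]
  rw [hxy, map_sum, rightHit_apply _ (ℛ K y)]
  simp [thetaMap_tmul_one_mul_comul lam hlam]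

lemma comul_comp_thetaMap_eq_lTensor :
    comul ∘ₗ thetaMap lam =
      (thetaMap lam).lTensor H ∘ₗ (TensorProduct.assoc K H H H).toLinearMap ∘ₗ
        (comul (R := K)).rTensor H := by
  refine TensorProduct.ext' fun x y ↦ ?_
  simp only [LinearMap.comp_apply, LinearEquiv.coe_coe, LinearMap.rTensor_tmul,
    thetaMap_tmul_eq_leftHit, comul_leftHit]
  rw [← (ℛ K x).eq]
  simp [sum_tmul, thetaMap_tmul_eq_leftHit]

lemma comul_comp_thetaMap_eq_rTensor (hlam : ∀ h, leftHit lam h = lam h • 1) :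
    comul ∘ₗ thetaMap lam =
      (thetaMap lam).rTensor H ∘ₗ (TensorProduct.assoc K H H H).symm.toLinearMap ∘ₗ
        (comul (R := K)).lTensor H := by
  refine TensorProduct.ext' fun x y ↦ ?_
  simp only [LinearMap.comp_apply, LinearEquiv.coe_coe, LinearMap.lTensor_tmul,
    thetaMap_tmul_eq_rightHit lam hlam, comul_rightHit]
  rw [← (ℛ K y).eq]
  simp [tmul_sum, thetaMap_tmul_eq_rightHit lam hlam]

end ThetaMap

/-- If `λ ∈ H*` is a left integral with `λ(1) = 1`, then `θ_λ` is an
`H`-bicolinear retraction of the comultiplication; in particular `H` is a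
coseparable coalgebra. -/
theorem total_dual_integral_gives_coseparable
    (lam : H →ₗ[K] K)
    (hlam : ∀ h : H,
      (TensorProduct.rid K H) ((LinearMap.lTensor H lam) (Coalgebra.comul (R := K) h)) =
        lam h • (1 : H))
    (hlam1 : lam (1 : H) = 1) :
    -- retraction of the comultiplication
    (thetaMap lam ∘ₗ Coalgebra.comul (R := K) = LinearMap.id) ∧
    -- left `H`-colinearity
    (Coalgebra.comul (R := K) ∘ₗ thetaMap lam =
      LinearMap.lTensor H (thetaMap lam)
        ∘ₗ (TensorProduct.assoc K H H H).toLinearMap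
        ∘ₗ LinearMap.rTensor H (Coalgebra.comul (R := K))) ∧
    -- right `H`-colinearity
    (Coalgebra.comul (R := K) ∘ₗ thetaMap lam =
      LinearMap.rTensor H (thetaMap lam)
        ∘ₗ (TensorProduct.assoc K H H H).symm.toLinearMap
        ∘ₗ LinearMap.lTensor H (Coalgebra.comul (R := K))) :=
  ⟨thetaMap_comp_comul lam hlam1, comul_comp_thetaMap_eq_lTensor lam,
    comul_comp_thetaMap_eq_rTensor lam hlam⟩
end

section
/- Let H be a Hopf algebra over a field K and λ ∈ H* a left integral on H. Then for all x, y ∈ H: x₁ λ(x₂ S(y)) = λ(x S(y₁)) y₂. -/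
/-!
The antipode is an anti-coalgebra map, `Δ(S y) = S(y₂) ⊗ S(y₁)`, since both sides are convolution
inverses of `Δ`. Put `Φ z = x₁ λ(x₂ z)`. The integral property at `x S(y)` then reads
`λ(x S(y)) 1 = Φ(S y₁) S(y₂)`, an identity of convolution products in `Hom(H, H)`. Convolving it on
the right with `id` and using `S * id = 1` turns the right-hand side into `Φ(S y) = x₁ λ(x₂ S(y))`,
while the left-hand side becomes `λ(x S(y₁)) y₂`.
-/

open TensorProduct WithConv LinearMap
open scoped RingTheory.LinearMap

namespace Coalgebra

variable {K C : Type*} [CommSemiring K] [AddCommMonoid C] [Module K C] [Coalgebra K C]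

lemma map_comul_comp_comul :
    (δ ⊗ₘ δ) ∘ₗ δ = (_root_.TensorProduct.assoc K C C (C ⊗[K] C)).symm.toLinearMap ∘ₗ
      lTensor C (_root_.TensorProduct.assoc K C C C).toLinearMap ∘ₗ
      lTensor C (rTensor C δ) ∘ₗ lTensor C δ ∘ₗ (δ : C →ₗ[K] C ⊗[K] C) := by
  simp only [coassoc_simps]

end Coalgebra

namespace HopfAlgebra

variable {K H : Type*} [CommSemiring K] [Semiring H] [HopfAlgebra K H]

local notation "𝑺" => antipode K (A := H)

lemma comul_left_inv :
    toConv ((𝑺 ⊗ₘ 𝑺) ∘ₗ (TensorProduct.comm K H H).toLinearMap ∘ₗ δ) * toConv δ = 1 := by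
  -- `Ψ (u ⊗ (c ⊗ z)) = c ⊗ S(u) z`
  let Ψ : H ⊗[K] (H ⊗[K] H) →ₗ[K] H ⊗[K] H :=
    lTensor H μ ∘ₗ (leftComm K H H H).toLinearMap ∘ₗ rTensor (H ⊗[K] H) 𝑺
  apply WithConv.ext
  rw [LinearMap.convMul_def, LinearMap.convOne_def]
  -- The product is `S(a₂) a₃ ⊗ S(a₁) a₄`; the middle pair `S(a₂) a₃` collapses to `ε(a₂)`.
  calc μ ∘ₗ (((𝑺 ⊗ₘ 𝑺) ∘ₗ (TensorProduct.comm K H H).toLinearMap ∘ₗ δ) ⊗ₘ δ) ∘ₗ δ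
      = μ ∘ₗ (((𝑺 ⊗ₘ 𝑺) ∘ₗ (TensorProduct.comm K H H).toLinearMap) ⊗ₘ id) ∘ₗ
          (δ ⊗ₘ δ) ∘ₗ δ := by
        rw [← comp_assoc _ (δ ⊗ₘ δ), ← map_comp, id_comp, comp_assoc]
    _ = Ψ ∘ₗ lTensor H (rTensor H (μ ∘ₗ rTensor H 𝑺)) ∘ₗ lTensor H (rTensor H δ) ∘ₗ
          lTensor H δ ∘ₗ δ := by
        rw [Coalgebra.map_comul_comp_comul]
        simp only [← comp_assoc]
        congr 3
        ext u v v' w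
        simp [Ψ]
    _ = Ψ ∘ₗ lTensor H (rTensor H (η ∘ₗ ε)) ∘ₗ lTensor H δ ∘ₗ δ := by
        rw [← mul_antipode_rTensor_comul]
        simp only [rTensor_comp, lTensor_comp, comp_assoc]
    _ = Algebra.TensorProduct.includeRight.toLinearMap ∘ₗ μ ∘ₗ rTensor H 𝑺 ∘ₗ δ := by
        simp only [rTensor_comp, lTensor_comp, comp_assoc]
        rw [← comp_assoc δ (lTensor H δ), ← lTensor_comp, Coalgebra.rTensor_counit_comp_comul]
        simp only [← comp_assoc]
        congr 1
        ext u v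
        simp [Ψ]
    _ = η ∘ₗ ε := by
        rw [mul_antipode_rTensor_comul]
        ext a
        simp [Algebra.algebraMap_eq_smul_one, smul_tmul', Algebra.TensorProduct.one_def]

lemma comul_comp_antipode :
    δ ∘ₗ 𝑺 = (𝑺 ⊗ₘ 𝑺) ∘ₗ (TensorProduct.comm K H H).toLinearMap ∘ₗ δ :=
  congrArg ofConv (left_inv_eq_right_inv comul_left_inv comul_right_inv).symm

end HopfAlgebra

namespace TensorProduct

variable {K A B : Type*} [CommSemiring K] [Semiring A] [Algebra K A] [Semiring B] [Algebra K B]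

lemma rid_lTensor_mul_tmul (f : B →ₗ[K] K) (t : A ⊗[K] B) (a : A) (b : B) :
    TensorProduct.rid K A (lTensor A f (t * a ⊗ₜ b)) =
      TensorProduct.rid K A (lTensor A f (t * 1 ⊗ₜ b)) * a := by
  induction t using TensorProduct.induction_on with
  | zero => simp
  | tmul u v => simp
  | add t t' ht ht' => simp [add_mul, ht, ht']

end TensorProduct

namespace HopfAlgebra

section Bialgebra

variable {K H : Type*} [CommSemiring K] [Semiring H] [Bialgebra K H]

def IsLeftIntegral (lam : H →ₗ[K] K) : Prop :=
  ∀ h : H, TensorProduct.rid K H (lTensor H lam (δ h)) = lam h • (1 : H)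

/-- `z ↦ x₁ λ(x₂ z)` -/
noncomputable def rightContract (lam : H →ₗ[K] K) (x : H) : H →ₗ[K] H :=
  (TensorProduct.rid K H).toLinearMap ∘ₗ lTensor H lam ∘ₗ mulLeft K (δ x) ∘ₗ
    Algebra.TensorProduct.includeRight.toLinearMap

lemma rightContract_apply (lam : H →ₗ[K] K) (x z : H) :
    rightContract lam x z = TensorProduct.rid K H (lTensor H (lam ∘ₗ mulRight K z) (δ x)) := by
  simp only [rightContract, comp_apply]
  induction (δ x : H ⊗[K] H) using TensorProduct.induction_on with
  | zero => simp
  | tmul u v => simp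
  | add t t' ht ht' => simp_all [add_mul]

lemma algebraMap_comp_mul_id_apply (f : H →ₗ[K] K) (y : H) :
    (toConv (η ∘ₗ f) * toConv LinearMap.id : WithConv (H →ₗ[K] H)) y =
      TensorProduct.lid K H (rTensor H f (δ y)) := by
  rw [convMul_apply]
  induction (δ y : H ⊗[K] H) using TensorProduct.induction_on with
  | zero => simp
  | tmul u v => simp [Algebra.smul_def]
  | add t t' ht ht' => simp_all

lemma IsLeftIntegral.mul_map_rightContract_comm_comul {lam : H →ₗ[K] K}
    (hlam : IsLeftIntegral lam) (x : H) :
    μ ∘ₗ (rightContract lam x ⊗ₘ id) ∘ₗ (TensorProduct.comm K H H).toLinearMap ∘ₗ δ =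
      η ∘ₗ lam ∘ₗ mulLeft K x := by
  ext z
  simp only [comp_apply, mulLeft_apply, Algebra.linearMap_apply, Algebra.algebraMap_eq_smul_one]
  rw [← hlam, Bialgebra.comul_mul]
  induction (δ z : H ⊗[K] H) using TensorProduct.induction_on with
  | zero => simp
  | tmul u v => simp [rightContract, rid_lTensor_mul_tmul lam _ u v]
  | add t t' ht ht' => simp_all [mul_add]

end Bialgebra

variable {K H : Type*} [CommSemiring K] [Semiring H] [HopfAlgebra K H]

local notation "𝑺" => antipode K (A := H)

lemma IsLeftIntegral.rightContract_comp_antipode_mul_antipode {lam : H →ₗ[K] K}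
    (hlam : IsLeftIntegral lam) (x : H) :
    toConv (rightContract lam x ∘ₗ 𝑺) * toConv 𝑺 = toConv (η ∘ₗ lam ∘ₗ mulLeft K x ∘ₗ 𝑺) := by
  apply WithConv.ext
  rw [LinearMap.convMul_def]
  calc μ ∘ₗ ((rightContract lam x ∘ₗ 𝑺) ⊗ₘ 𝑺) ∘ₗ δ
      = μ ∘ₗ (rightContract lam x ⊗ₘ id) ∘ₗ (TensorProduct.comm K H H).toLinearMap ∘ₗ
          (𝑺 ⊗ₘ 𝑺) ∘ₗ (TensorProduct.comm K H H).toLinearMap ∘ₗ δ := by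
        rw [← comp_assoc _ (𝑺 ⊗ₘ 𝑺), ← map_comp_comm_eq, comp_assoc, comm_comp_comm_assoc,
          ← comp_assoc _ (𝑺 ⊗ₘ 𝑺), ← map_comp, id_comp]
    _ = μ ∘ₗ (rightContract lam x ⊗ₘ id) ∘ₗ (TensorProduct.comm K H H).toLinearMap ∘ₗ δ ∘ₗ 𝑺 := by
        rw [comul_comp_antipode]
    _ = η ∘ₗ lam ∘ₗ mulLeft K x ∘ₗ 𝑺 := by
        have h := hlam.mul_map_rightContract_comm_comul x
        simp only [← comp_assoc] at h ⊢
        rw [h]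

end HopfAlgebra

open HopfAlgebra

/-- If `λ ∈ H*` is a left integral on a Hopf algebra `H` over a field `K`,
then `x₁ λ(x₂ S(y)) = λ(x S(y₁)) y₂` for all `x, y ∈ H`. -/
theorem left_dual_integral_identity
    {K : Type*} {H : Type*} [Field K] [Ring H] [HopfAlgebra K H]
    (lam : H →ₗ[K] K)
    (hlam : ∀ h : H,
      (TensorProduct.rid K H) ((LinearMap.lTensor H lam) (Coalgebra.comul (R := K) h)) =
        lam h • (1 : H)) :
    ∀ x y : H,
      -- `x₁ λ(x₂ S(y))`
      (TensorProduct.rid K H)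
          ((LinearMap.lTensor H
              (lam ∘ₗ LinearMap.mulRight K (HopfAlgebra.antipode (R := K) y)))
            (Coalgebra.comul (R := K) x)) =
        -- `λ(x S(y₁)) y₂`
        (TensorProduct.lid K H)
          ((LinearMap.rTensor H
              (lam ∘ₗ LinearMap.mulLeft K x ∘ₗ HopfAlgebra.antipode (R := K)))
            (Coalgebra.comul (R := K) y)) := by
  intro x y
  have hconv := IsLeftIntegral.rightContract_comp_antipode_mul_antipode hlam x
  calc _ = rightContract lam x (antipode K y) := (rightContract_apply lam x _).symm
    _ = (toConv (rightContract lam x ∘ₗ antipode K) *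
          (toConv (antipode K) * toConv LinearMap.id) : WithConv (H →ₗ[K] H)) y := by
        rw [antipode_mul_id, mul_one]
        rfl
    _ = (toConv (η ∘ₗ lam ∘ₗ mulLeft K x ∘ₗ antipode K) * toConv LinearMap.id :
          WithConv (H →ₗ[K] H)) y := by
        rw [← mul_assoc, hconv]
    _ = _ := algebraMap_comp_mul_id_apply _ y
end

section
/- Let K be a field of characteristic p > 0 and let K[X] be the polynomial Hopf algebra with X primitive (Δ(X) = 1⊗X + X⊗1). Then there is no K-linear map χ : K[X] ⊗ (K[X]/K) → K[X]/K satisfying both: (i) for all x, y, writing χ(x ⊗ ȳ) = ā, one has a₁ ⊗ ā₂ = x₁ ⊗ χ(x₂ ⊗ ȳ) in K[X] ⊗ (K[X]/K); and (ii) χ(x₁ ⊗ x̄₂) = x̄ for all x. In particular K[X] is not formally smooth as a coalgebra when char K = p > 0. -/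
open TensorProduct Polynomial

variable (K : Type*) [Field K]

/-- The comultiplication of the polynomial Hopf algebra `K[X]` with `X`
primitive: the algebra map determined by `Δ(X) = 1 ⊗ X + X ⊗ 1`. -/
noncomputable def polyComul : K[X] →ₗ[K] K[X] ⊗[K] K[X] :=
  (Polynomial.aeval
    ((1 : K[X]) ⊗ₜ[K] (Polynomial.X : K[X]) +
      (Polynomial.X : K[X]) ⊗ₜ[K] (1 : K[X]))).toLinearMap

/-- The quotient coalgebra `K[X]/K` (cokernel of the unit). -/
abbrev PolyQuot : Type _ := K[X] ⧸ (Submodule.span K {(1 : K[X])})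

/-- The canonical projection `K[X] → K[X]/K`. -/
noncomputable def polyPi : K[X] →ₗ[K] PolyQuot K :=
  (Submodule.span K {(1 : K[X])}).mkQ

/-- Coefficient functional on the quotient, for `m ≠ 0`. -/
noncomputable def fQ (m : ℕ) (hm : m ≠ 0) : PolyQuot K →ₗ[K] K :=
  Submodule.liftQ _ (lcoeff K m) (by
    rw [Submodule.span_le, Set.singleton_subset_iff]
    simp [LinearMap.mem_ker, coeff_one, hm])

lemma fQ_pi (m : ℕ) (hm : m ≠ 0) (x : K[X]) :
    fQ K m hm (polyPi K x) = x.coeff m := by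
  simp [fQ, polyPi, Submodule.mkQ_apply, Submodule.liftQ_apply, lcoeff_apply]

/-- `coeff i ⊗ coeff m` functional on `K[X] ⊗ (K[X]/K)`. -/
noncomputable def Gf (i m : ℕ) (hm : m ≠ 0) : (K[X] ⊗[K] PolyQuot K) →ₗ[K] K :=
  (TensorProduct.lid K K).toLinearMap ∘ₗ TensorProduct.map (lcoeff K i) (fQ K m hm)

lemma Gf_tmul (i m : ℕ) (hm : m ≠ 0) (x : K[X]) (q : PolyQuot K) :
    Gf K i m hm (x ⊗ₜ[K] q) = x.coeff i * fQ K m hm q := by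
  simp [Gf, lcoeff_apply, smul_eq_mul]

lemma comul_X_pow (n : ℕ) :
    polyComul K (X ^ n) = ∑ k ∈ Finset.range (n + 1),
      (n.choose k) • (((X : K[X]) ^ (n - k)) ⊗ₜ[K] ((X : K[X]) ^ k)) := by
  simp only [polyComul, AlgHom.toLinearMap_apply, map_pow, aeval_X]
  rw [add_pow]
  refine Finset.sum_congr rfl fun k hk => ?_
  rw [Algebra.TensorProduct.tmul_pow, Algebra.TensorProduct.tmul_pow, one_pow, one_pow,
    Algebra.TensorProduct.tmul_mul_tmul, one_mul, mul_one, mul_comm, ← nsmul_eq_mul]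

lemma Gf_comul (i m : ℕ) (hm : m ≠ 0) (n : ℕ) :
    Gf K i m hm ((LinearMap.lTensor K[X] (polyPi K)) (polyComul K (X ^ n))) =
      if i + m = n then (n.choose m : K) else 0 := by
  rw [comul_X_pow, map_sum, map_sum]
  simp only [map_nsmul, LinearMap.lTensor_tmul, Gf_tmul, fQ_pi, coeff_X_pow]
  rw [Finset.sum_eq_single m]
  · by_cases h : i + m = n
    · have h2 : i = n - m := by omega
      have h3 : n - m + m = n := by omega
      simp [h, h2, h3]
    · by_cases h2 : i = n - m
      · have hn : n < m := by omega
        simp [h, Nat.choose_eq_zero_of_lt hn]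
      · simp [h, h2]
  · intro b _ hb
    simp [Ne.symm hb]
  · intro hmem
    have hn : n < m := by simpa using hmem
    simp [Nat.choose_eq_zero_of_lt hn]

/-- In characteristic `p > 0` there is no fs-retraction
`χ : K[X] ⊗ (K[X]/K) → K[X]/K`, i.e. no `K`-linear map satisfying both
(i) left colinearity `a₁ ⊗ ā₂ = x₁ ⊗ χ(x₂ ⊗ ȳ)` whenever `ā = χ(x ⊗ ȳ)`, and
(ii) `χ(x₁ ⊗ x̄₂) = x̄`. In particular `K[X]` is not formally smooth as a
coalgebra in positive characteristic. -/
theorem no_fs_retraction_of_polynomial_hopf_algebra_char_p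
    (p : ℕ) (hp : p ≠ 0) [CharP K p] :
    ¬ ∃ χ : K[X] ⊗[K] PolyQuot K →ₗ[K] PolyQuot K,
      -- (i) left colinearity
      (∀ x y a : K[X],
        polyPi K a = χ (x ⊗ₜ[K] polyPi K y) →
        (LinearMap.lTensor K[X] (polyPi K)) (polyComul K a) =
          (LinearMap.lTensor K[X]
              (χ ∘ₗ (TensorProduct.mk K K[X] (PolyQuot K)).flip (polyPi K y)))
            (polyComul K x)) ∧
      -- (ii) retraction of the induced comultiplication
      (∀ x : K[X],
        χ ((LinearMap.lTensor K[X] (polyPi K)) (polyComul K x)) = polyPi K x) := by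
  rintro ⟨χ, h1, h2⟩
  haveI : Nontrivial (K[X] ⊗[K] K[X]) :=
    (Algebra.TensorProduct.lmul' K (S := K[X])).toRingHom.domain_nontrivial
  haveI : CharP (K[X] ⊗[K] K[X]) p :=
    charP_of_injective_algebraMap (algebraMap K _).injective p
  haveI hfact : Fact p.Prime := ⟨(CharP.char_is_prime_or_zero K p).resolve_right hp⟩
  have hp1 : p ≠ 1 := hfact.out.ne_one
  have hπ1 : polyPi K (1 : K[X]) = 0 := by
    simp [polyPi, Submodule.mkQ_apply, Submodule.Quotient.mk_eq_zero,
      Submodule.mem_span_singleton_self]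
  -- Δ(X^p) = 1 ⊗ X^p + X^p ⊗ 1
  have hcom : (LinearMap.lTensor K[X] (polyPi K)) (polyComul K ((X : K[X]) ^ p)) =
      (1 : K[X]) ⊗ₜ[K] polyPi K (X ^ p) := by
    have hw : polyComul K ((X : K[X]) ^ p) =
        ((1 : K[X]) ⊗ₜ[K] (X : K[X]) + (X : K[X]) ⊗ₜ[K] (1 : K[X])) ^ p := by
      simp [polyComul, map_pow]
    rw [hw, add_pow_char, Algebra.TensorProduct.tmul_pow, Algebra.TensorProduct.tmul_pow,
      one_pow, map_add, LinearMap.lTensor_tmul, LinearMap.lTensor_tmul, hπ1,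
      tmul_zero, add_zero]
  -- from (ii): χ(1 ⊗ π(X^p)) = π(X^p)
  have h3 : χ ((1 : K[X]) ⊗ₜ[K] polyPi K (X ^ p)) = polyPi K (X ^ p) := by
    rw [← hcom]; exact h2 _
  -- lift of χ(X ⊗ π(X^p))
  obtain ⟨a, ha⟩ := Submodule.mkQ_surjective (Submodule.span K {(1 : K[X])})
    (χ ((X : K[X]) ⊗ₜ[K] polyPi K (X ^ p)))
  have ha' : polyPi K a = χ ((X : K[X]) ⊗ₜ[K] polyPi K (X ^ p)) := ha
  have E := h1 X (X ^ p) a ha'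
  -- compute the right-hand side of E
  have hΔX : polyComul K (X : K[X]) =
      (1 : K[X]) ⊗ₜ[K] (X : K[X]) + (X : K[X]) ⊗ₜ[K] (1 : K[X]) := by
    simp [polyComul, aeval_X]
  rw [hΔX, map_add, LinearMap.lTensor_tmul, LinearMap.lTensor_tmul] at E
  simp only [LinearMap.comp_apply, LinearMap.flip_apply, TensorProduct.mk_apply] at E
  rw [← ha', h3] at E
  -- the two functionals agree on (id ⊗ π) ∘ Δ
  have hmaps : (Gf K 1 p hp) ∘ₗ ((LinearMap.lTensor K[X] (polyPi K)) ∘ₗ polyComul K) =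
      (Gf K p 1 one_ne_zero) ∘ₗ ((LinearMap.lTensor K[X] (polyPi K)) ∘ₗ polyComul K) := by
    apply Polynomial.lhom_ext'
    intro n
    apply LinearMap.ext_ring
    simp only [LinearMap.comp_apply, Polynomial.monomial_one_right_eq_X_pow]
    rw [Gf_comul, Gf_comul]
    by_cases h : 1 + p = n
    · rw [if_pos h, if_pos (by omega)]
      subst h
      have hcs := Nat.choose_symm (n := 1 + p) (k := 1) (by omega)
      rw [Nat.add_sub_cancel_left] at hcs
      exact_mod_cast congrArg (Nat.cast (R := K)) hcs
    · rw [if_neg h, if_neg (by omega)]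
  have hD := LinearMap.congr_fun hmaps a
  simp only [LinearMap.comp_apply] at hD
  have e1 := congrArg (Gf K 1 p hp) E
  have e2 := congrArg (Gf K p 1 one_ne_zero) E
  simp only [map_add, Gf_tmul, fQ_pi] at e1 e2
  have hc11 : (1 : K[X]).coeff 1 = 0 := by simp [coeff_one]
  have hc1p : (1 : K[X]).coeff p = 0 := by simp [coeff_one, hp]
  have hcX1 : (X : K[X]).coeff 1 = 1 := coeff_X_one
  have hcXp : (X : K[X]).coeff p = 0 := by
    rw [Polynomial.coeff_X, if_neg (fun h => hp1 h.symm)]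
  have hXpp : ((X : K[X]) ^ p).coeff p = 1 := by simp [coeff_X_pow]
  rw [hc11, hcX1, hXpp] at e1
  rw [hc1p, hcXp] at e2
  simp only [zero_mul, one_mul, mul_one, add_zero, zero_add] at e1 e2
  exact one_ne_zero (e1.symm.trans (hD.trans e2))
end

section
/- Let E be a connected Hopf algebra over a field K of characteristic 0 and x ∈ P(E) a nonzero primitive element. Then the unique algebra homomorphism σ : K[X] → E with σ(X) = x is an injective Hopf algebra homomorphism; in particular the Hopf subalgebra of E generated by x is isomorphic to the polynomial Hopf algebra K[X] with X primitive. -/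
open TensorProduct Polynomial

variable (K : Type*) [Field K]

/-- The counit of the polynomial Hopf algebra: evaluation at `0`. -/
noncomputable def polyCounit : K[X] →ₗ[K] K :=
  (Polynomial.aeval (0 : K)).toLinearMap

/-- A `K`-subspace `V` of a coalgebra `E` is a subcoalgebra if
`Δ(V) ⊆ V ⊗ V`. -/
def IsSubcoalgebra {E : Type*} [Ring E] [HopfAlgebra K E]
    (V : Submodule K E) : Prop :=
  ∀ v ∈ V, Coalgebra.comul (R := K) v ∈
    LinearMap.range (TensorProduct.map V.subtype V.subtype)

/-- A Hopf algebra `E` is connected if its coradical is `K·1`, i.e. every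
simple subcoalgebra of `E` equals `K·1`. -/
def IsConnectedHopf (E : Type*) [Ring E] [HopfAlgebra K E] : Prop :=
  ∀ V : Submodule K E, IsSubcoalgebra K V → V ≠ ⊥ →
    (∀ W : Submodule K E, W ≤ V → IsSubcoalgebra K W → W = ⊥ ∨ W = V) →
    V = Submodule.span K {(1 : E)}

/-! If `x` were algebraic with minimal polynomial of degree `n`, then `1, x, …, x ^ (n - 1)` would
be linearly independent with `x ^ n` in their span. Pairing
`Δ (x ^ m) = ∑ i + j = m, (m choose i) • x ^ i ⊗ x ^ j` against `f ⊗ g`, where `f` and `g` are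
coordinate functionals of `x` and `x ^ (n - 1)`, gives `0` for `m < n` but `n` for `m = n`,
so `n = 0` in `K`. Degree one is excluded because then `x` is a scalar, and `ε x = 0`. -/

open Finset.HasAntidiagonal

variable {K}

theorem LinearIndependent.exists_dual_apply_eq_ite {ι R V : Type*} [DivisionRing R]
    [AddCommGroup V] [Module R V] [DecidableEq ι] {v : ι → V} (hv : LinearIndependent R v)
    (i : ι) : ∃ f : Module.Dual R V, ∀ j, f (v j) = if j = i then 1 else 0 := by
  obtain ⟨f, hf⟩ := LinearMap.exists_extend ((Module.Basis.span hv).coord i)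
  refine ⟨f, fun j => ?_⟩
  simpa [Module.Basis.span_apply, Finsupp.single_apply] using
    LinearMap.congr_fun hf (Module.Basis.span hv j)

section Primitive

variable {R A : Type*}

theorem counit_eq_zero_of_comul_eq [CommRing R] [Ring A] [Bialgebra R A] {x : A}
    (hx : Coalgebra.comul (R := R) x = (1 : A) ⊗ₜ[R] x + x ⊗ₜ[R] (1 : A)) :
    Coalgebra.counit (R := R) x = 0 := by
  have h := congrArg (TensorProduct.lid R A) (Coalgebra.rTensor_counit_comul (R := R) x)
  simp only [hx, map_add, LinearMap.rTensor_tmul, Bialgebra.counit_one, lid_tmul, one_smul,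
    add_eq_left] at h
  simpa using congrArg (Coalgebra.counit (R := R)) h

theorem comul_pow_eq_sum_antidiagonal [CommSemiring R] [Semiring A] [Bialgebra R A] {x : A}
    (hx : Coalgebra.comul (R := R) x = (1 : A) ⊗ₜ[R] x + x ⊗ₜ[R] (1 : A)) (n : ℕ) :
    Coalgebra.comul (R := R) (x ^ n) =
      ∑ ij ∈ antidiagonal n, n.choose ij.1 • ((x ^ ij.1) ⊗ₜ[R] (x ^ ij.2)) := by
  have hcomm : Commute (x ⊗ₜ[R] (1 : A)) ((1 : A) ⊗ₜ[R] x) := by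
    simp [Commute, SemiconjBy, Algebra.TensorProduct.tmul_mul_tmul]
  rw [← Bialgebra.comulAlgHom_apply, map_pow, Bialgebra.comulAlgHom_apply, hx, add_comm,
    hcomm.add_pow']
  simp [Algebra.TensorProduct.tmul_pow, Algebra.TensorProduct.tmul_mul_tmul, nsmul_eq_mul]

end Primitive

theorem comul_comp_aeval_of_comul_eq {E : Type*} [Ring E] [Bialgebra K E] {x : E}
    (hx : Coalgebra.comul (R := K) x = (1 : E) ⊗ₜ[K] x + x ⊗ₜ[K] (1 : E)) :
    Coalgebra.comul (R := K) ∘ₗ (aeval x : K[X] →ₐ[K] E).toLinearMap =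
      TensorProduct.map (aeval x : K[X] →ₐ[K] E).toLinearMap
        (aeval x : K[X] →ₐ[K] E).toLinearMap ∘ₗ polyComul K := by
  have h : (Bialgebra.comulAlgHom K E).comp (aeval x) =
      (Algebra.TensorProduct.map (aeval x) (aeval x)).comp
        (aeval ((1 : K[X]) ⊗ₜ[K] (X : K[X]) + (X : K[X]) ⊗ₜ[K] (1 : K[X]))) :=
    Polynomial.algHom_ext (by simp [hx])
  exact congrArg AlgHom.toLinearMap h

theorem counit_comp_aeval_of_comul_eq {E : Type*} [Ring E] [Bialgebra K E] {x : E}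
    (hx : Coalgebra.comul (R := K) x = (1 : E) ⊗ₜ[K] x + x ⊗ₜ[K] (1 : E)) :
    Coalgebra.counit (R := K) ∘ₗ (aeval x : K[X] →ₐ[K] E).toLinearMap = polyCounit K := by
  have h : (Bialgebra.counitAlgHom K E).comp (aeval x) = aeval 0 :=
    Polynomial.algHom_ext (by simp [counit_eq_zero_of_comul_eq hx])
  exact congrArg AlgHom.toLinearMap h

theorem natCast_eq_zero_of_pow_mem_span {E : Type*} [Ring E] [Bialgebra K E] {x : E}
    (hx : Coalgebra.comul (R := K) x = (1 : E) ⊗ₜ[K] x + x ⊗ₜ[K] (1 : E)) {n : ℕ} (hn : 2 ≤ n)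
    (hli : LinearIndependent K fun i : Fin n => x ^ (i : ℕ))
    (hmem : x ^ n ∈ Submodule.span K (Set.range fun i : Fin n => x ^ (i : ℕ))) :
    (n : K) = 0 := by
  obtain ⟨f, hf⟩ := hli.exists_dual_apply_eq_ite ⟨1, by omega⟩
  obtain ⟨g, hg⟩ := hli.exists_dual_apply_eq_ite ⟨n - 1, by omega⟩
  have hf' : ∀ i < n, f (x ^ i) = if i = 1 then 1 else 0 := fun i hi => by
    simpa [Fin.ext_iff] using hf ⟨i, hi⟩
  have hg' : ∀ j < n, g (x ^ j) = if j = n - 1 then 1 else 0 := fun j hj => by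
    simpa [Fin.ext_iff] using hg ⟨j, hj⟩
  have hf1 : f 1 = 0 := by simpa using hf' 0 (by omega)
  have hg1 : g 1 = 0 := by simpa [show 0 ≠ n - 1 by omega] using hg' 0 (by omega)
  -- `f` and `g` are unknown on `x ^ n`, but it only occurs paired with `1`, where they vanish.
  have hfg : ∀ i j, i + j ≤ n →
      f (x ^ i) * g (x ^ j) = if (i, j) = (1, n - 1) then 1 else 0 := by
    intro i j hij
    rcases (show (i < n ∧ j < n) ∨ j = 0 ∨ i = 0 by omega) with ⟨hi, hj⟩ | rfl | rfl
    · rw [hf' i hi, hg' j hj, ite_zero_mul_ite_zero, mul_one]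
      simp only [Prod.mk.injEq]
    · simp [hg1, show 0 ≠ n - 1 by omega]
    · simp [hf1]
  set L : Module.Dual K E := LinearMap.mul' K K ∘ₗ TensorProduct.map f g ∘ₗ Coalgebra.comul
  have hL : ∀ m ≤ n, L (x ^ m) = if m = n then (n : K) else 0 := by
    intro m hm
    simp only [L, LinearMap.comp_apply, comul_pow_eq_sum_antidiagonal hx, map_sum, map_nsmul,
      map_tmul, LinearMap.mul'_apply]
    rw [Finset.sum_congr rfl fun ij hij => by
      rw [hfg ij.1 ij.2 (by rw [mem_antidiagonal] at hij; omega)]]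
    simp only [smul_ite, smul_zero, Finset.sum_ite_eq', mem_antidiagonal, nsmul_one,
      show 1 + (n - 1) = m ↔ m = n by omega]
    split_ifs with h <;> simp [h]
  have hker : Submodule.span K (Set.range fun i : Fin n => x ^ (i : ℕ)) ≤ LinearMap.ker L :=
    Submodule.span_le.mpr (by rintro _ ⟨i, rfl⟩; simp [hL i i.isLt.le, i.isLt.ne])
  simpa [hL n le_rfl] using hker hmem

theorem transcendental_of_comul_eq [CharZero K] {E : Type*} [Ring E] [Bialgebra K E] {x : E}
    (hx0 : x ≠ 0) (hx : Coalgebra.comul (R := K) x = (1 : E) ⊗ₜ[K] x + x ⊗ₜ[K] (1 : E)) :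
    Transcendental K x := by
  intro halg
  have hint := halg.isIntegral
  have : Nontrivial E := nontrivial_of_ne x 0 hx0
  have hn1 : (minpoly K x).natDegree ≠ 1 := by
    rw [Ne, minpoly.natDegree_eq_one_iff]
    rintro ⟨c, rfl⟩
    have hc := counit_eq_zero_of_comul_eq hx
    rw [Bialgebra.counit_algebraMap] at hc
    simp [hc] at hx0
  have hn2 : 2 ≤ (minpoly K x).natDegree := by
    have := minpoly.natDegree_pos hint
    omega
  exact Nat.cast_ne_zero.mpr (by omega) <| natCast_eq_zero_of_pow_mem_span hx hn2
    (linearIndependent_pow x) (hint.mem_span_pow ⟨X ^ (minpoly K x).natDegree, by simp⟩)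

theorem connected_hopf_primitive_gives_polynomial_subalgebra_general
    [CharZero K] {E : Type*} [Ring E] [HopfAlgebra K E]
    (x : E) (hx : x ≠ 0)
    (hprim : Coalgebra.comul (R := K) x = (1 : E) ⊗ₜ[K] x + x ⊗ₜ[K] (1 : E)) :
    Function.Injective (Polynomial.aeval x : K[X] →ₐ[K] E) ∧
    -- `σ` is a coalgebra homomorphism:
    (Coalgebra.comul (R := K)) ∘ₗ (Polynomial.aeval x : K[X] →ₐ[K] E).toLinearMap =
      (TensorProduct.map (Polynomial.aeval x : K[X] →ₐ[K] E).toLinearMap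
        (Polynomial.aeval x : K[X] →ₐ[K] E).toLinearMap) ∘ₗ polyComul K ∧
    (Coalgebra.counit (R := K)) ∘ₗ (Polynomial.aeval x : K[X] →ₐ[K] E).toLinearMap =
      polyCounit K :=
  ⟨transcendental_iff_injective.mp (transcendental_of_comul_eq hx hprim),
    comul_comp_aeval_of_comul_eq hprim, counit_comp_aeval_of_comul_eq hprim⟩

/-- If `E` is a connected Hopf algebra over a field of characteristic `0` and
`x ∈ P(E)` is a nonzero primitive, then the unique algebra map
`σ : K[X] → E` with `σ(X) = x` is an injective Hopf algebra homomorphism;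
in particular the Hopf subalgebra generated by `x` is isomorphic to the
polynomial Hopf algebra `K[X]` with `X` primitive. -/
theorem connected_hopf_primitive_gives_polynomial_subalgebra
    [CharZero K] {E : Type*} [Ring E] [HopfAlgebra K E]
    (hconn : IsConnectedHopf K E)
    (x : E) (hx : x ≠ 0)
    (hprim : Coalgebra.comul (R := K) x = (1 : E) ⊗ₜ[K] x + x ⊗ₜ[K] (1 : E)) :
    Function.Injective (Polynomial.aeval x : K[X] →ₐ[K] E) ∧
    -- `σ` is a coalgebra homomorphism:
    (Coalgebra.comul (R := K)) ∘ₗ (Polynomial.aeval x : K[X] →ₐ[K] E).toLinearMap =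
      (TensorProduct.map (Polynomial.aeval x : K[X] →ₐ[K] E).toLinearMap
        (Polynomial.aeval x : K[X] →ₐ[K] E).toLinearMap) ∘ₗ polyComul K ∧
    (Coalgebra.counit (R := K)) ∘ₗ (Polynomial.aeval x : K[X] →ₐ[K] E).toLinearMap =
      polyCounit K :=
  connected_hopf_primitive_gives_polynomial_subalgebra_general x hx hprim
end
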